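/- arXiv:2205.13597 — 7 statements merged into one kernel-verified Lean document; each statement's English description precedes it below -/
import Mathlib

section
/- Let u₁,…,u_p be monomials in K[x₁,…,x_r]. The following are equivalent: (2) for any j ≠ k in {1,…,r} there exists i with x_j ∣ u_i and x_k ∤ u_i; (3) for any k ∈ {1,…,r} there exists a subset I ⊆ {1,…,p} such that the support of the product ∏_{i∈I} u_i equals {x₁,…,x_r} \ {x_k}. -/
open scoped BigOperators

/-- For monomials u₁,…,u_p in K[x₁,…,x_r] (given by their exponent vectors),
the condition "for any j ≠ k there exists i with x_j ∣ u_i and x_k ∤ u_i" is equivalent to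
"for any k there exists I ⊆ {1,…,p} with supp(∏_{i∈I} u_i) = {x₁,…,x_r} \ {x_k}". -/
theorem stmt_3 (r p : ℕ) (u : Fin p → Fin r → ℕ) :
    (∀ j k : Fin r, j ≠ k → ∃ i : Fin p, 0 < u i j ∧ u i k = 0) ↔
    (∀ k : Fin r, ∃ I : Finset (Fin p),
      {j : Fin r | 0 < ∑ i ∈ I, u i j} = {j : Fin r | j ≠ k}) := by
  constructor
  · intro h k
    refine ⟨Finset.univ.filter (fun i => u i k = 0), ?_⟩
    ext j
    simp only [Set.mem_setOf_eq]
    constructor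
    · intro hj hjk
      subst hjk
      have : ∑ i ∈ Finset.univ.filter (fun i => u i j = 0), u i j = 0 := by
        apply Finset.sum_eq_zero
        intro i hi
        exact (Finset.mem_filter.mp hi).2
      omega
    · intro hjk
      obtain ⟨i, hi1, hi2⟩ := h j k hjk
      calc 0 < u i j := hi1
        _ ≤ _ := Finset.single_le_sum (f := fun i => u i j) (fun _ _ => Nat.zero_le _)
          (Finset.mem_filter.mpr ⟨Finset.mem_univ i, hi2⟩)
  · intro h j k hjk
    obtain ⟨I, hI⟩ := h k
    have hj : 0 < ∑ i ∈ I, u i j := by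
      have := Set.ext_iff.mp hI j
      simpa using this.mpr hjk
    have hk : ∑ i ∈ I, u i k = 0 := by
      have := Set.ext_iff.mp hI k
      simp only [Set.mem_setOf_eq, ne_eq, not_true_eq_false, iff_false, not_lt,
        Nat.le_zero] at this
      exact this
    obtain ⟨i, hiI, hipos⟩ : ∃ i ∈ I, 0 < u i j := by
      by_contra hc
      push_neg at hc
      have : ∑ i ∈ I, u i j = 0 := Finset.sum_eq_zero fun i hi => by
        have := hc i hi; omega
      omega
    refine ⟨i, hipos, ?_⟩
    have := Finset.sum_eq_zero_iff.mp hk i hiI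
    exact this
end

section
/- A finite group G is almost monomial if and only if, writing R_G = K[u₁,…,u_p] for the monomial algebra generated by the monomials corresponding to a generating set of M(G), for any j ≠ k ∈ {1,…,r} there exists i ∈ {1,…,p} such that x_j divides u_i and x_k does not divide u_i. -/
open scoped Classical BigOperators

variable {G : Type} [Group G] [Fintype G]

noncomputable def inducedChar (H : Subgroup G) (lam : H →* ℂ) : G → ℂ :=
  fun g => (Nat.card H : ℂ)⁻¹ *
    ∑ x : G, if h : x⁻¹ * g * x ∈ H then lam ⟨x⁻¹ * g * x, h⟩ else 0

def IsMonomialChar (f : G → ℂ) : Prop :=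
  ∃ (H : Subgroup G) (lam : H →* ℂ), f = inducedChar H lam

def IsIrrChar (f : G → ℂ) : Prop :=
  ∃ V : FDRep ℂ G, CategoryTheory.Simple V ∧ f = V.character

noncomputable def innerChar (f g : G → ℂ) : ℂ :=
  (Nat.card G : ℂ)⁻¹ * ∑ x : G, f x * (starRingEnd ℂ) (g x)

def IsAlmostMonomialGroup (G : Type) [Group G] [Fintype G] : Prop :=
  ∀ χ ψ : G → ℂ, IsIrrChar χ → IsIrrChar ψ → χ ≠ ψ →
    ∃ (H : Subgroup G) (lam : H →* ℂ),
      innerChar (inducedChar H lam) χ ≠ 0 ∧ innerChar (inducedChar H lam) ψ = 0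

/-!
By Frobenius reciprocity, `⟨λ^G, χ⟩ = dim Hom_H(λ, χ|_H)` is a natural number for every linear
character `λ` of a subgroup `H` and every character `χ` of `G`. If `λ^G = ∑ cᵢ uᵢ` with
`cᵢ ∈ ℕ`, then `⟨λ^G, ψ⟩ = 0` forces `⟨uᵢ, ψ⟩ = 0` whenever `cᵢ ≠ 0`, while `⟨λ^G, χ⟩ ≠ 0`
provides such an `i` with `⟨uᵢ, χ⟩ ≠ 0`. Conversely each `uᵢ` is itself induced from a linear
character.
-/

section LinearCharacter

universe u

variable {k H : Type u} [Field k] [Monoid H]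

noncomputable def linearCharRep (lam : H →* k) : FDRep k H :=
  FDRep.of ((algebraMap k (Module.End k k) : k →* Module.End k k).comp lam)

@[simp]
theorem linearCharRep_character (lam : H →* k) : (linearCharRep lam).character = lam := by
  ext h
  change LinearMap.trace k k (algebraMap k (Module.End k k) (lam h)) = lam h
  simp [Algebra.algebraMap_eq_smul_one]

end LinearCharacter

theorem starRingEnd_linearChar {H : Type*} [Group H] [Finite H] (lam : H →* ℂ) (h : H) :
    starRingEnd ℂ (lam h) = lam h⁻¹ := by
  have hnorm : ‖lam h‖ = 1 :=
    Complex.norm_eq_one_of_pow_eq_one (by rw [← map_pow, pow_card_eq_one', map_one])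
      Nat.card_pos.ne'
  rw [← Complex.inv_eq_conj hnorm]
  exact (eq_inv_of_mul_eq_one_left (by rw [← map_mul, inv_mul_cancel, map_one])).symm

theorem Subgroup.sum_dite_mem {M : Type*} [AddCommMonoid M] (H : Subgroup G) (f : H → M) :
    ∑ g : G, (if hg : g ∈ H then f ⟨g, hg⟩ else 0) = ∑ h : H, f h := by
  rw [Finset.sum_dite, Finset.sum_const_zero, add_zero]
  exact Fintype.sum_equiv (Equiv.subtypeEquivRight (by simp)) _ _ (fun _ => rfl)

theorem innerChar_inducedChar {χ : G → ℂ} (hχ : ∀ g x, χ (x * g * x⁻¹) = χ g)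
    (H : Subgroup G) (lam : H →* ℂ) :
    innerChar (inducedChar H lam) χ
      = (Nat.card H : ℂ)⁻¹ * ∑ h : H, lam h * starRingEnd ℂ (χ h) := by
  have hconj : ∀ x : G, ∑ g : G, (if hg : x⁻¹ * g * x ∈ H then lam ⟨_, hg⟩ else 0)
      * starRingEnd ℂ (χ g) = ∑ h : H, lam h * starRingEnd ℂ (χ h) := by
    intro x
    rw [← H.sum_dite_mem (fun h => lam h * starRingEnd ℂ (χ h))]
    refine Fintype.sum_equiv (MulAut.conj x⁻¹).toEquiv _ _ (fun g => ?_)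
    simp only [MulEquiv.toEquiv_eq_coe, MulEquiv.coe_toEquiv, MulAut.conj_apply, inv_inv]
    have hχg : χ (x⁻¹ * g * x) = χ g := by simpa using hχ g x⁻¹
    rw [← hχg]
    split_ifs <;> simp
  calc innerChar (inducedChar H lam) χ
      = (Nat.card G : ℂ)⁻¹ * (Nat.card H : ℂ)⁻¹ * ∑ x : G, ∑ g : G,
          (if hg : x⁻¹ * g * x ∈ H then lam ⟨_, hg⟩ else 0) * starRingEnd ℂ (χ g) := by
        simp only [innerChar, inducedChar, mul_assoc, Finset.sum_mul, ← Finset.mul_sum]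
        rw [Finset.sum_comm]
    _ = (Nat.card H : ℂ)⁻¹ * ∑ h : H, lam h * starRingEnd ℂ (χ h) := by
        simp only [hconj, Finset.sum_const, Finset.card_univ, nsmul_eq_mul,
          Fintype.card_eq_nat_card]
        field_simp

theorem innerChar_inducedChar_character (H : Subgroup G) (lam : H →* ℂ) (V : FDRep ℂ G) :
    innerChar (inducedChar H lam) V.character
      = Module.finrank ℂ (linearCharRep lam ⟶ FDRep.of (V.ρ.comp H.subtype)) := by
  have hres : ∀ h : H, (FDRep.of (V.ρ.comp H.subtype)).character h = V.character h := by
    simp [FDRep.character]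
  have hfrob := FDRep.scalar_product_char_eq_finrank_equivariant (linearCharRep lam)
    (FDRep.of (V.ρ.comp H.subtype))
  simp only [hres, linearCharRep_character] at hfrob
  -- Mathlib's scalar product pairs `χ h` with `λ h⁻¹ = conj (λ h)`; conjugating matches the two.
  apply (starRingEnd ℂ).injective
  rw [innerChar_inducedChar (FDRep.char_conj V), Complex.conj_natCast, ← hfrob, map_mul, map_inv₀,
    Complex.conj_natCast, map_sum]
  congr 1
  refine Finset.sum_congr rfl fun h _ => ?_
  rw [map_mul, Complex.conj_conj, starRingEnd_linearChar, mul_comm]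

theorem innerChar_sum_nsmul {α : Type} {ι : Type*} [Fintype α] [Fintype ι] (u : ι → α → ℂ)
    (c : ι → ℕ) (ψ : α → ℂ) :
    innerChar (∑ i, c i • u i) ψ = ∑ i, c i • innerChar (u i) ψ := by
  simp only [innerChar, Finset.sum_apply, Pi.smul_apply, Finset.sum_mul, Finset.mul_sum,
    smul_mul_assoc, Finset.smul_sum, mul_smul_comm]
  exact Finset.sum_comm

open scoped ComplexOrder in
theorem exists_constituent_of_mem_closure {ι : Type*} [Fintype ι] {u : ι → G → ℂ}
    (hu : ∀ i, IsMonomialChar (u i)) {f χ : G → ℂ} {V : FDRep ℂ G}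
    (hf : f ∈ AddSubmonoid.closure (Set.range u)) (hχ : innerChar f χ ≠ 0)
    (hV : innerChar f V.character = 0) :
    ∃ i, innerChar (u i) χ ≠ 0 ∧ innerChar (u i) V.character = 0 := by
  obtain ⟨c, rfl⟩ := AddSubmonoid.exists_of_mem_closure_range u f hf
  rw [innerChar_sum_nsmul] at hχ hV
  obtain ⟨i, -, hi⟩ := Finset.exists_ne_zero_of_sum_ne_zero hχ
  have hnonneg : ∀ j, 0 ≤ c j • innerChar (u j) V.character := fun j => by
    obtain ⟨H, lam, hH⟩ := hu j
    rw [hH, innerChar_inducedChar_character]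
    exact nsmul_nonneg (Nat.cast_nonneg _) _
  have hci : c i • innerChar (u i) V.character = 0 :=
    (Finset.sum_eq_zero_iff_of_nonneg fun j _ => hnonneg j).mp hV i (Finset.mem_univ i)
  exact ⟨i, right_ne_zero_of_smul hi,
    (smul_eq_zero.mp hci).resolve_left (left_ne_zero_of_smul hi)⟩

/-- `xⱼ ∣ uᵢ` is encoded as `innerChar (u i) χⱼ ≠ 0`: the exponent of `xⱼ` in `uᵢ` is the
multiplicity of `χⱼ` in `uᵢ`. -/
theorem stmt_4 (p : ℕ) (u : Fin p → (G → ℂ))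
    (hu : ∀ i, IsMonomialChar (u i))
    (hgen : AddSubmonoid.closure (Set.range u) =
      AddSubmonoid.closure {f : G → ℂ | IsMonomialChar f}) :
    IsAlmostMonomialGroup G ↔
    ∀ χ ψ : G → ℂ, IsIrrChar χ → IsIrrChar ψ → χ ≠ ψ →
      ∃ i : Fin p, innerChar (u i) χ ≠ 0 ∧ innerChar (u i) ψ = 0 := by
  constructor
  · intro hAM χ ψ hχ hψ hne
    obtain ⟨H, lam, hχH, hψH⟩ := hAM χ ψ hχ hψ hne
    obtain ⟨V, -, rfl⟩ := hψ
    have hmem : inducedChar H lam ∈ AddSubmonoid.closure (Set.range u) :=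
      hgen ▸ AddSubmonoid.subset_closure ⟨H, lam, rfl⟩
    exact exists_constituent_of_mem_closure hu hmem hχH hψH
  · intro hsep χ ψ hχ hψ hne
    obtain ⟨i, hχi, hψi⟩ := hsep χ ψ hχ hψ hne
    obtain ⟨H, lam, hH⟩ := hu i
    exact ⟨H, lam, hH ▸ hχi, hH ▸ hψi⟩
end

section
/- Let A = (a_{ij}) be a 3×3 matrix of nonnegative integers whose first row is (1,0,0), with det A = ±1, and suppose that for all j ≠ k in {1,2,3} there exists i with a_{ij} > 0 and a_{ik} = 0 (the 'almost monomial' divisibility condition on the associated monomials u_i = ∏_j x_j^{a_{ij}}). Then A is the identity matrix up to a permutation of the rows 2 and 3. -/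
/-- A 3×3 nonnegative integer matrix with first row (1,0,0), det A = ±1,
satisfying the almost monomial divisibility condition, is the identity matrix up to a
permutation of the rows 2 and 3. -/
theorem stmt_6 (A : Matrix (Fin 3) (Fin 3) ℕ)
    (h1 : A 0 0 = 1) (h2 : A 0 1 = 0) (h3 : A 0 2 = 0)
    (hdet : (A.map (Nat.cast : ℕ → ℤ)).det = 1 ∨ (A.map (Nat.cast : ℕ → ℤ)).det = -1)
    (hcond : ∀ j k : Fin 3, j ≠ k → ∃ i : Fin 3, 0 < A i j ∧ A i k = 0) :
    A = 1 ∨ A = (1 : Matrix (Fin 3) (Fin 3) ℕ).submatrix (Equiv.swap (1 : Fin 3) 2) id := by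
  rw [Matrix.det_fin_three] at hdet
  simp only [Matrix.map_apply, h1, h2, h3, Nat.cast_one, Nat.cast_zero, one_mul, zero_mul,
    mul_zero, sub_zero, zero_sub, add_zero, sub_self] at hdet
  obtain ⟨i, hi1, hi2⟩ := hcond 1 2 (by decide)
  obtain ⟨j, hj1, hj2⟩ := hcond 2 1 (by decide)
  have hine : i ≠ 0 := by rintro rfl; omega
  have hjne : j ≠ 0 := by rintro rfl; omega
  have hi : i = 1 ∨ i = 2 := by omega
  have hj : j = 1 ∨ j = 2 := by omega
  rcases hi with rfl | rfl <;> rcases hj with rfl | rfl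
  · omega
  · -- identity case: A 1 1 > 0, A 1 2 = 0, A 2 2 > 0, A 2 1 = 0
    left
    rw [hi2, hj2] at hdet
    push_cast at hdet
    have hd : (A 1 1 : ℤ) * (A 2 2 : ℤ) = 1 := by
      rcases hdet with h | h
      · linarith
      · nlinarith [Int.natCast_nonneg (A 1 1), Int.natCast_nonneg (A 2 2)]
    have hd' : A 1 1 * A 2 2 = 1 := by exact_mod_cast hd
    obtain ⟨h11, h22⟩ := mul_eq_one.mp hd'
    obtain ⟨k, hk1, hk2⟩ := hcond 1 0 (by decide)
    obtain ⟨l, hl1, hl2⟩ := hcond 2 0 (by decide)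
    have h10 : A 1 0 = 0 := by
      have : k ≠ 0 := by rintro rfl; omega
      have : k ≠ 2 := by rintro rfl; omega
      have : k = 1 := by omega
      subst this; exact hk2
    have h20 : A 2 0 = 0 := by
      have : l ≠ 0 := by rintro rfl; omega
      have : l ≠ 1 := by rintro rfl; omega
      have : l = 2 := by omega
      subst this; exact hl2
    ext a b
    fin_cases a <;> fin_cases b <;>
      simp_all [Matrix.one_apply]
  · -- swap case: A 2 1 > 0, A 2 2 = 0, A 1 2 > 0, A 1 1 = 0
    right
    rw [hi2, hj2] at hdet
    push_cast at hdet
    have hd : (A 1 2 : ℤ) * (A 2 1 : ℤ) = 1 := by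
      rcases hdet with h | h
      · nlinarith [Int.natCast_nonneg (A 1 2), Int.natCast_nonneg (A 2 1)]
      · linarith
    have hd' : A 1 2 * A 2 1 = 1 := by exact_mod_cast hd
    obtain ⟨h12, h21⟩ := mul_eq_one.mp hd'
    obtain ⟨k, hk1, hk2⟩ := hcond 1 0 (by decide)
    obtain ⟨l, hl1, hl2⟩ := hcond 2 0 (by decide)
    have h20 : A 2 0 = 0 := by
      have : k ≠ 0 := by rintro rfl; omega
      have : k ≠ 1 := by rintro rfl; omega
      have : k = 2 := by omega
      subst this; exact hk2
    have h10 : A 1 0 = 0 := by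
      have : l ≠ 0 := by rintro rfl; omega
      have : l ≠ 2 := by rintro rfl; omega
      have : l = 1 := by omega
      subst this; exact hl2
    ext a b
    fin_cases a <;> fin_cases b <;>
      simp_all [Matrix.one_apply, Matrix.submatrix_apply, Equiv.swap_apply_def]
  · omega
end

section
/- Let A = (a_{ij}) be a 4×4 matrix of nonnegative integers whose first row is (1,0,0,0), with det A = ±1, and suppose that for all j ≠ k in {1,2,3,4} there exists i with a_{ij} > 0 and a_{ik} = 0. Then some permutation of the rows of A equals the identity matrix I₄. -/
/-!
Expanding along the first row, the lower right 3 × 3 minor `B` of `A` has determinant `±1` and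
inherits the divisibility condition, which says that the column supports of `B` form an antichain
of three subsets of a three-element set. Such an antichain consists either of three singletons or
of three two-element sets. In the first case `B` is a monomial matrix whose entries multiply to
`1`, hence a permutation matrix. In the second case, after permuting its rows, `B` has zero
diagonal and positive off-diagonal entries, so `det B = b₁₂ b₂₃ b₃₁ + b₁₃ b₂₁ b₃₂ ≥ 2`, which is
impossible. Finally, the divisibility condition for the pairs `(j, 1)` forces the first column
of `A` to vanish below the first row.
-/

open Finset Matrix

set_option maxRecDepth 100000 in
lemma Finset.card_eq_one_or_card_eq_two_of_not_subset (s : Fin 3 → Finset (Fin 3))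
    (h : ∀ j k, j ≠ k → ¬ s j ⊆ s k) : (∀ j, #(s j) = 1) ∨ ∀ j, #(s j) = 2 := by
  revert s; decide

namespace Matrix

/-- The divisibility condition: no column support is contained in another. -/
def SeparatedColumns {m n : Type*} (A : Matrix m n ℕ) : Prop :=
  ∀ j k, j ≠ k → ∃ i, 0 < A i j ∧ A i k = 0

section Unimodular

variable {n : Type*} [Fintype n] [DecidableEq n]

lemma natAbs_det_map_submatrix_perm (B : Matrix n n ℕ) (σ : Equiv.Perm n) :
    ((B.submatrix σ id).map (Nat.cast : ℕ → ℤ)).det.natAbs =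
      (B.map (Nat.cast : ℕ → ℤ)).det.natAbs := by
  rw [← submatrix_map, det_permute, Int.cast_id, Int.natAbs_mul, Int.units_natAbs, one_mul]

lemma eq_one_of_isDiag_of_natAbs_det (C : Matrix n n ℕ) (hC : C.IsDiag)
    (hdet : (C.map (Nat.cast : ℕ → ℤ)).det.natAbs = 1) : C = 1 := by
  rw [← hC.diagonal_diag, diagonal_map Nat.cast_zero, det_diagonal, ← Nat.cast_prod,
    Int.natAbs_natCast] at hdet
  have hdiag : C.diag = fun _ ↦ 1 :=
    funext fun i ↦ Nat.eq_one_of_dvd_one (hdet ▸ dvd_prod_of_mem _ (mem_univ i))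
  rw [← hC.diagonal_diag, hdiag, diagonal_one]

lemma submatrix_perm_eq_one (B : Matrix n n ℕ) (σ : Equiv.Perm n)
    (hB : ∀ i j, i ≠ σ j → B i j = 0) (hdet : (B.map (Nat.cast : ℕ → ℤ)).det.natAbs = 1) :
    B.submatrix σ id = 1 :=
  eq_one_of_isDiag_of_natAbs_det _ (fun _ _ hij ↦ hB _ _ (σ.injective.ne hij))
    (by rwa [natAbs_det_map_submatrix_perm])

end Unimodular

lemma two_le_det_of_diag_eq_zero (C : Matrix (Fin 3) (Fin 3) ℕ) (hdiag : ∀ i, C i i = 0)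
    (hoff : ∀ i j, i ≠ j → 0 < C i j) : 2 ≤ (C.map (Nat.cast : ℕ → ℤ)).det := by
  have hdet : (C.map (Nat.cast : ℕ → ℤ)).det =
      ((C 0 1 * C 1 2 * C 2 0 + C 0 2 * C 1 0 * C 2 1 : ℕ) : ℤ) := by
    rw [det_fin_three]
    simp only [map_apply, hdiag, Nat.cast_zero, Nat.cast_add, Nat.cast_mul]
    ring
  have h₁ : 0 < C 0 1 * C 1 2 * C 2 0 :=
    Nat.mul_pos (Nat.mul_pos (hoff 0 1 (by decide)) (hoff 1 2 (by decide))) (hoff 2 0 (by decide))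
  have h₂ : 0 < C 0 2 * C 1 0 * C 2 1 :=
    Nat.mul_pos (Nat.mul_pos (hoff 0 2 (by decide)) (hoff 1 0 (by decide))) (hoff 2 1 (by decide))
  omega

theorem exists_perm_submatrix_eq_one_of_fin_three (B : Matrix (Fin 3) (Fin 3) ℕ)
    (hdet : (B.map (Nat.cast : ℕ → ℤ)).det.natAbs = 1) (hsep : B.SeparatedColumns) :
    ∃ σ : Equiv.Perm (Fin 3), B.submatrix σ id = 1 := by
  set s : Fin 3 → Finset (Fin 3) := fun j ↦ {i | 0 < B i j}
  have hmem : ∀ i j, i ∈ s j ↔ 0 < B i j := by simp [s]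
  have hinc : ∀ j k, j ≠ k → ¬ s j ⊆ s k := by
    intro j k hjk hsub
    obtain ⟨i, hpos, hzero⟩ := hsep j k hjk
    exact ((hmem i k).1 (hsub ((hmem i j).2 hpos))).ne' hzero
  have hinj : Function.Injective s := fun j k h ↦ by_contra fun hjk ↦ hinc j k hjk h.subset
  rcases card_eq_one_or_card_eq_two_of_not_subset s hinc with hcard | hcard
  · choose f hf using fun j ↦ card_eq_one.1 (hcard j)
    have hfinj : Function.Injective f := fun j k h ↦ hinj (by rw [hf, hf, h])
    refine ⟨.ofBijective f hfinj.bijective_of_finite, submatrix_perm_eq_one B _ ?_ hdet⟩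
    intro i j hij
    by_contra hne
    have hi := (hmem i j).2 (Nat.pos_of_ne_zero hne)
    exact hij (by simpa [hf] using hi)
  · exfalso
    have hcompl : ∀ j, #(s j)ᶜ = 1 := fun j ↦ by rw [card_compl, hcard, Fintype.card_fin]
    choose g hg using fun j ↦ card_eq_one.1 (hcompl j)
    have hginj : Function.Injective g := fun j k h ↦ hinj (compl_injective (by rw [hg, hg, h]))
    have hzero : ∀ i j, B i j = 0 ↔ i = g j := fun i j ↦ by
      simpa [hmem] using Finset.ext_iff.1 (hg j) i
    set σ : Equiv.Perm (Fin 3) := .ofBijective g hginj.bijective_of_finite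
    have h2 := two_le_det_of_diag_eq_zero (B.submatrix σ id) (fun i ↦ (hzero _ _).2 rfl)
      (fun i j hij ↦ Nat.pos_of_ne_zero fun h ↦ hij (hginj ((hzero _ _).1 h)))
    have h1 := natAbs_det_map_submatrix_perm B σ
    omega

section FinSucc

variable {n : ℕ}

lemma det_eq_det_submatrix_succ_of_row_zero {R : Type*} [CommRing R]
    (A : Matrix (Fin (n + 1)) (Fin (n + 1)) R) (h00 : A 0 0 = 1)
    (hrow : ∀ j : Fin n, A 0 j.succ = 0) :
    A.det = (A.submatrix Fin.succ Fin.succ).det := by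
  simp [det_succ_row_zero A, Fin.sum_univ_succ, h00, hrow]

lemma SeparatedColumns.submatrix_succ {A : Matrix (Fin (n + 1)) (Fin (n + 1)) ℕ}
    (hsep : A.SeparatedColumns) (hrow : ∀ j : Fin n, A 0 j.succ = 0) :
    (A.submatrix Fin.succ Fin.succ).SeparatedColumns := by
  intro j k hjk
  obtain ⟨i, hpos, hzero⟩ := hsep j.succ k.succ (Fin.succ_injective _ |>.ne hjk)
  cases i using Fin.cases with
  | zero => exact absurd (hrow j) hpos.ne'
  | succ i => exact ⟨i, hpos, hzero⟩

lemma exists_perm_submatrix_eq_one_of_submatrix_succ (A : Matrix (Fin (n + 1)) (Fin (n + 1)) ℕ)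
    (h00 : A 0 0 = 1) (hrow : ∀ j : Fin n, A 0 j.succ = 0) (hsep : A.SeparatedColumns)
    (τ : Equiv.Perm (Fin n)) (hτ : (A.submatrix Fin.succ Fin.succ).submatrix τ id = 1) :
    ∃ σ : Equiv.Perm (Fin (n + 1)), A.submatrix σ id = 1 := by
  have hminor : ∀ i j, A (τ i).succ j.succ = if i = j then 1 else 0 := fun i j ↦ by
    simpa [one_apply] using congr_fun₂ hτ i j
  have hcol : ∀ i, A (τ i).succ 0 = 0 := fun i ↦ by
    obtain ⟨r, hpos, hzero⟩ := hsep i.succ 0 (Fin.succ_ne_zero i)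
    cases r using Fin.cases with
    | zero => exact absurd (hrow i) hpos.ne'
    | succ r =>
      obtain ⟨r, rfl⟩ := τ.surjective r
      obtain rfl : r = i := by by_contra h; simp [hminor, h] at hpos
      exact hzero
  refine ⟨Equiv.Perm.decomposeFin.symm (0, τ), ?_⟩
  ext i j
  cases i using Fin.cases <;> cases j using Fin.cases <;>
    simp [h00, hrow, hcol, hminor, one_apply, Fin.succ_ne_zero, (Fin.succ_ne_zero _).symm]

end FinSucc

end Matrix

/-- A 4×4 nonnegative integer matrix with first row (1,0,0,0), det A = ±1,
satisfying the almost monomial divisibility condition, becomes the identity matrix after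
some permutation of its rows. -/
theorem stmt_7 (A : Matrix (Fin 4) (Fin 4) ℕ)
    (h1 : A 0 0 = 1) (h2 : A 0 1 = 0) (h3 : A 0 2 = 0) (h4 : A 0 3 = 0)
    (hdet : (A.map (Nat.cast : ℕ → ℤ)).det = 1 ∨ (A.map (Nat.cast : ℕ → ℤ)).det = -1)
    (hcond : ∀ j k : Fin 4, j ≠ k → ∃ i : Fin 4, 0 < A i j ∧ A i k = 0) :
    ∃ σ : Equiv.Perm (Fin 4), A.submatrix σ id = 1 := by
  have hrow : ∀ j : Fin 3, A 0 j.succ = 0 := by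
    intro j; fin_cases j <;> assumption
  have hdetB : ((A.submatrix Fin.succ Fin.succ).map (Nat.cast : ℕ → ℤ)).det.natAbs = 1 := by
    rw [← submatrix_map, ← det_eq_det_submatrix_succ_of_row_zero _ (by simp [h1])
      (by simp [hrow]), Int.natAbs_eq_iff]
    exact hdet
  obtain ⟨τ, hτ⟩ := exists_perm_submatrix_eq_one_of_fin_three _ hdetB
    (SeparatedColumns.submatrix_succ hcond hrow)
  exact exists_perm_submatrix_eq_one_of_submatrix_succ A h1 hrow hcond τ hτ
end

section
/- There exists a 5×5 matrix A of nonnegative integers with first row (1,0,0,0,0) and det A = 1 such that for all j ≠ k in {1,…,5} there exists a row i with a_{ij} > 0 and a_{ik} = 0, but A is not a permutation matrix; for instance the matrix with rows (1,0,0,0,0), (0,2,0,1,0), (0,0,1,0,1), (0,1,1,0,0), (0,0,0,1,1). -/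
namespace Matrix

variable {n R : Type*} [DecidableEq n] [Semiring R] [PartialOrder R] [ZeroLEOneClass R]

theorem one_submatrix_apply_le_one (σ : n → n) (i j : n) :
    (1 : Matrix n n R).submatrix σ id i j ≤ 1 := by
  rw [submatrix_apply, one_apply]
  split_ifs
  exacts [le_rfl, zero_le_one]

theorem not_exists_eq_one_submatrix_of_one_lt {A : Matrix n n R} {i j : n} (h : 1 < A i j) :
    ¬ ∃ σ : Equiv.Perm n, A = (1 : Matrix n n R).submatrix σ id := by
  rintro ⟨σ, rfl⟩
  exact (one_submatrix_apply_le_one σ i j).not_gt h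

end Matrix

/-- There is a 5×5 nonnegative integer matrix with first row (1,0,0,0,0),
determinant 1, satisfying the almost monomial divisibility condition, which is not a
permutation matrix; e.g. the matrix with rows (1,0,0,0,0), (0,2,0,1,0), (0,0,1,0,1),
(0,1,1,0,0), (0,0,0,1,1). -/
theorem stmt_8 :
    ∃ A : Matrix (Fin 5) (Fin 5) ℕ,
      A = !![1,0,0,0,0; 0,2,0,1,0; 0,0,1,0,1; 0,1,1,0,0; 0,0,0,1,1] ∧
      (A 0 0 = 1 ∧ A 0 1 = 0 ∧ A 0 2 = 0 ∧ A 0 3 = 0 ∧ A 0 4 = 0) ∧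
      (A.map (Nat.cast : ℕ → ℤ)).det = 1 ∧
      (∀ j k : Fin 5, j ≠ k → ∃ i : Fin 5, 0 < A i j ∧ A i k = 0) ∧
      ¬ ∃ σ : Equiv.Perm (Fin 5), A = (1 : Matrix (Fin 5) (Fin 5) ℕ).submatrix σ id := by
  refine ⟨_, rfl, ⟨rfl, rfl, rfl, rfl, rfl⟩, ?det, ?support, ?notPerm⟩
  case det => simp [Matrix.det_succ_row_zero, Fin.sum_univ_succ, Fin.succAbove]
  case support => decide
  case notPerm => exact Matrix.not_exists_eq_one_submatrix_of_one_lt (i := 1) (j := 1) (by decide)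
end

section
/- Let G be a finite group and N a normal subgroup. Identify Irr(G/N) with {χ ∈ Irr(G) : N ⊆ ker χ} = {χ₁,…,χ_s} ⊆ Irr(G) = {χ₁,…,χᵣ}. Then the monoid M(G/N) of sums of monomial characters of G/N, viewed inside ℕ^r via this identification, equals M(G) ∩ ℕ^s, i.e. R_{G/N} = R_G ∩ K[x₁,…,x_s]. -/
open scoped Classical BigOperators

variable {G : Type} [Group G] [Fintype G]

/-!
Inflation sends the monomial character `μ^{G/N}` (`μ` linear on `K ≤ G/N`) to the monomial
character of `G` induced from the preimage of `K`. Conversely, averaging over `N` is an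
additive projection onto the `N`-invariant functions, and it sends `λ^G` (`λ` linear on
`H ≤ G`) to `0` if `λ` is nontrivial on `H ∩ N`, and otherwise to the inflation of `λ̄^{G/N}`,
where `λ̄` is the character of `HN/N ≅ H/(H ∩ N)` induced by `λ`. Both computations use
`λ^G g = |H|⁻¹ ∑ₓ λ°(x⁻¹ g x)`, with `λ°` the extension of `λ` by zero.
-/

open QuotientGroup

theorem MonoidHom.sum_comp_of_surjective {K Q M : Type*} [Group K] [Group Q] [Fintype K]
    [Fintype Q] [AddCommMonoid M] {φ : K →* Q} (hφ : Function.Surjective φ) (F : Q → M) :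
    ∑ x, F (φ x) = Nat.card φ.ker • ∑ y, F y := by
  rw [← Fintype.sum_fiberwise' φ, Finset.smul_sum]
  refine Finset.sum_congr rfl fun y _ => ?_
  rw [Finset.sum_const, Finset.card_univ, ← Nat.card_eq_fintype_card]
  exact congrArg (· • F y) (Nat.card_congr (φ.fiberEquivKerOfSurjective hφ y))

theorem MonoidHom.card_eq_card_mul_card_ker_of_surjective {K Q : Type*} [Group K] [Group Q]
    {φ : K →* Q} (hφ : Function.Surjective φ) :
    Nat.card K = Nat.card Q * Nat.card φ.ker := by
  rw [Subgroup.card_eq_card_quotient_mul_card_subgroup φ.ker,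
    Nat.card_congr (quotientKerEquivOfSurjective φ hφ).toEquiv]

section ZeroExtension

variable (H : Subgroup G) (lam : H →* ℂ)

omit [Fintype G] in
noncomputable def zeroExtension (g : G) : ℂ :=
  if h : g ∈ H then lam ⟨g, h⟩ else 0

omit [Fintype G] in
theorem zeroExtension_of_mem {g : G} (hg : g ∈ H) : zeroExtension H lam g = lam ⟨g, hg⟩ :=
  dif_pos hg

omit [Fintype G] in
theorem zeroExtension_of_notMem {g : G} (hg : g ∉ H) : zeroExtension H lam g = 0 :=
  dif_neg hg

omit [Fintype G] in
theorem zeroExtension_mul_of_mem (g : G) {h : G} (hh : h ∈ H) :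
    zeroExtension H lam (g * h) = zeroExtension H lam g * lam ⟨h, hh⟩ := by
  by_cases hg : g ∈ H
  · rw [zeroExtension_of_mem H lam (H.mul_mem hg hh), zeroExtension_of_mem H lam hg, ← map_mul]
    rfl
  · rw [zeroExtension_of_notMem H lam hg, zeroExtension_of_notMem H lam
      fun hgh => hg (by simpa using H.mul_mem hgh (H.inv_mem hh)), zero_mul]

omit [Fintype G] in
theorem mul_zeroExtension_of_mem {h : G} (hh : h ∈ H) (g : G) :
    zeroExtension H lam (h * g) = lam ⟨h, hh⟩ * zeroExtension H lam g := by
  by_cases hg : g ∈ H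
  · rw [zeroExtension_of_mem H lam (H.mul_mem hh hg), zeroExtension_of_mem H lam hg, ← map_mul]
    rfl
  · rw [zeroExtension_of_notMem H lam hg, zeroExtension_of_notMem H lam
      fun hhg => hg (by simpa using H.mul_mem (H.inv_mem hh) hhg), mul_zero]

omit [Fintype G] in
theorem zeroExtension_comp {Q : Type} [Group Q] (f : G →* Q) (K : Subgroup Q) (μ : K →* ℂ) :
    zeroExtension (K.comap f) (μ.comp (f.subgroupComap K)) = zeroExtension K μ ∘ f := by
  funext g
  by_cases hg : f g ∈ K
  · rw [Function.comp_apply, zeroExtension_of_mem K μ hg,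
      zeroExtension_of_mem (K.comap f) _ (Subgroup.mem_comap.2 hg)]
    rfl
  · rw [Function.comp_apply, zeroExtension_of_notMem K μ hg,
      zeroExtension_of_notMem (K.comap f) _ (mt Subgroup.mem_comap.1 hg)]

end ZeroExtension

noncomputable def conjSum : (G → ℂ) →ₗ[ℂ] (G → ℂ) where
  toFun f g := ∑ x, f (x⁻¹ * g * x)
  map_add' f₁ f₂ := by ext g; simp [Finset.sum_add_distrib]
  map_smul' c f := by ext g; simp [Finset.mul_sum]

theorem conjSum_apply (f : G → ℂ) (g : G) : conjSum f g = ∑ x, f (x⁻¹ * g * x) := rfl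

theorem inducedChar_eq_smul_conjSum (H : Subgroup G) (lam : H →* ℂ) :
    inducedChar H lam = (Nat.card H : ℂ)⁻¹ • conjSum (zeroExtension H lam) := rfl

section Quotient

variable (N H : Subgroup G) (lam : H →* ℂ)

noncomputable def averageOver : (G → ℂ) →ₗ[ℂ] (G → ℂ) where
  toFun f g := (Nat.card N : ℂ)⁻¹ * ∑ n : N, f (g * n)
  map_add' f₁ f₂ := by ext g; simp [Finset.sum_add_distrib, mul_add]
  map_smul' c f := by ext g; simp [Finset.mul_sum]; ring_nf

theorem averageOver_apply (f : G → ℂ) (g : G) :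
    averageOver N f g = (Nat.card N : ℂ)⁻¹ * ∑ n : N, f (g * n) := rfl

theorem averageOver_of_forall_mul_mem {f : G → ℂ}
    (hf : ∀ g : G, ∀ n ∈ N, f (g * n) = f g) :
    averageOver N f = f := by
  funext g
  have hN : (Nat.card N : ℂ) ≠ 0 := Nat.cast_ne_zero.2 Nat.card_pos.ne'
  simp only [averageOver_apply, fun n : N => hf g n n.2, Finset.sum_const, Finset.card_univ,
    ← Nat.card_eq_fintype_card, nsmul_eq_mul, inv_mul_cancel_left₀ hN]

theorem averageOver_zeroExtension_of_not_le_ker (hlam : ¬ N.subgroupOf H ≤ lam.ker) :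
    averageOver N (zeroExtension H lam) = 0 := by
  obtain ⟨h₀, hh₀N, hh₀⟩ := SetLike.not_le_iff_exists.1 hlam
  funext g
  set S := ∑ n : N, zeroExtension H lam (g * n)
  -- translating by `h₀ ∈ H ∩ N` multiplies `S` by `lam h₀ ≠ 1`
  have hS : S * lam h₀ = S := by
    rw [Finset.sum_mul]
    refine Fintype.sum_equiv (Equiv.mulRight ⟨h₀, hh₀N⟩) _ _ fun n => ?_
    rw [← zeroExtension_mul_of_mem H lam _ h₀.2]
    simp [mul_assoc]
  have hS0 : S = 0 := by_contra fun hS0 => hh₀ (MonoidHom.mem_ker.2 ((mul_eq_left₀ hS0).1 hS))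
  show (Nat.card N : ℂ)⁻¹ * S = 0
  rw [hS0, mul_zero]

theorem sum_zeroExtension_of_le_ker (hlam : N.subgroupOf H ≤ lam.ker) :
    ∑ n : N, zeroExtension H lam n = Nat.card (N.subgroupOf H) := by
  have hval : ∀ n : N, zeroExtension H lam n = if (n : G) ∈ H then 1 else 0 := fun n => by
    split_ifs with hn
    · exact (zeroExtension_of_mem H lam hn).trans (hlam (Subgroup.mem_subgroupOf.2 n.2))
    · exact zeroExtension_of_notMem H lam hn
  rw [Finset.sum_congr rfl fun n _ => hval n, Finset.sum_boole, ← Fintype.card_subtype,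
    ← Nat.card_eq_fintype_card]
  exact congrArg _ <| Nat.card_congr
    { toFun := fun n => ⟨⟨n.1, n.2⟩, n.1.2⟩
      invFun := fun h => ⟨⟨h.1, h.2⟩, h.1.2⟩
      left_inv := fun _ => rfl
      right_inv := fun _ => rfl }

variable [N.Normal]

theorem averageOver_conjSum (f : G → ℂ) :
    averageOver N (conjSum f) = conjSum (averageOver N f) := by
  funext g
  simp only [averageOver_apply, conjSum_apply, Finset.mul_sum]
  rw [Finset.sum_comm]
  refine Finset.sum_congr rfl fun x _ => ?_
  refine Fintype.sum_equiv (MulAut.conjNormal (H := N) x⁻¹).toEquiv _ _ fun n => ?_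
  simp [mul_assoc]

theorem averageOver_inducedChar_of_not_le_ker (hlam : ¬ N.subgroupOf H ≤ lam.ker) :
    averageOver N (inducedChar H lam) = 0 := by
  rw [inducedChar_eq_smul_conjSum, map_smul, averageOver_conjSum,
    averageOver_zeroExtension_of_not_le_ker N H lam hlam, map_zero, smul_zero]

omit [Fintype G] in
theorem ker_subgroupMap_mk' : ((mk' N).subgroupMap H).ker = N.subgroupOf H := by
  rw [Subgroup.ker_subgroupMap, ker_mk']

omit [Fintype G] in
theorem card_eq_card_map_mk'_mul_card_subgroupOf :
    Nat.card H = Nat.card (H.map (mk' N)) * Nat.card (N.subgroupOf H) := by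
  rw [MonoidHom.card_eq_card_mul_card_ker_of_surjective ((mk' N).subgroupMap_surjective H),
    ker_subgroupMap_mk']

omit [Fintype G] in
theorem card_comap_mk' (K : Subgroup (G ⧸ N)) :
    Nat.card (K.comap (mk' N)) = Nat.card K * Nat.card N := by
  rw [MonoidHom.card_eq_card_mul_card_ker_of_surjective
    ((mk' N).subgroupComap_surjective_of_surjective K (mk'_surjective N))]
  have hker : ((mk' N).subgroupComap K).ker = N.subgroupOf (K.comap (mk' N)) := by
    ext x
    rw [MonoidHom.mem_ker, Subgroup.mem_subgroupOf, Subtype.ext_iff]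
    exact QuotientGroup.eq_one_iff _
  rw [hker, Nat.card_congr (Subgroup.subgroupOfEquivOfLe fun n hn => ?_).toEquiv]
  simp [(QuotientGroup.eq_one_iff n).2 hn]

omit [Fintype G] in
/-- The lift goes through `ℂˣ` because `MonoidHom.liftOfSurjective` needs a group as codomain. -/
noncomputable def quotientChar (hlam : N.subgroupOf H ≤ lam.ker) : H.map (mk' N) →* ℂ :=
  (Units.coeHom ℂ).comp <| ((mk' N).subgroupMap H).liftOfSurjective
    ((mk' N).subgroupMap_surjective H)
    ⟨lam.toHomUnits, by rwa [MonoidHom.ker_toHomUnits, ker_subgroupMap_mk']⟩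

omit [Fintype G] in
theorem quotientChar_subgroupMap (hlam : N.subgroupOf H ≤ lam.ker) (h : H) :
    quotientChar N H lam hlam ((mk' N).subgroupMap H h) = lam h :=
  congrArg Units.val (MonoidHom.liftOfRightInverse_comp_apply ((mk' N).subgroupMap H) _ _ _ h)

theorem averageOver_zeroExtension_of_le_ker (hlam : N.subgroupOf H ≤ lam.ker) :
    averageOver N (zeroExtension H lam) = ((Nat.card (N.subgroupOf H) : ℂ) / Nat.card N) •
      (zeroExtension (H.map (mk' N)) (quotientChar N H lam hlam) ∘ mk' N) := by
  funext a
  rw [averageOver_apply, Pi.smul_apply, Function.comp_apply, smul_eq_mul, div_eq_inv_mul,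
    mul_assoc]
  congr 1
  by_cases ha : mk' N a ∈ H.map (mk' N)
  · obtain ⟨h, hh, hha⟩ := id ha
    have hn : h⁻¹ * a ∈ N := QuotientGroup.eq.1 hha
    calc ∑ n : N, zeroExtension H lam (a * n)
        = ∑ n : N, zeroExtension H lam (h * n) :=
          Fintype.sum_equiv (Equiv.mulLeft ⟨h⁻¹ * a, hn⟩) _ _ fun n => by simp [mul_assoc]
      _ = lam ⟨h, hh⟩ * Nat.card (N.subgroupOf H) := by
          simp_rw [mul_zeroExtension_of_mem H lam hh, ← Finset.mul_sum,
            sum_zeroExtension_of_le_ker N H lam hlam]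
      _ = _ := by
          rw [mul_comm, zeroExtension_of_mem _ _ ha,
            ← quotientChar_subgroupMap N H lam hlam ⟨h, hh⟩]
          exact congrArg (fun y => _ * quotientChar N H lam hlam y) (Subtype.ext hha)
  · rw [zeroExtension_of_notMem _ _ ha, mul_zero]
    exact Finset.sum_eq_zero fun n _ => zeroExtension_of_notMem H lam fun han =>
      ha ⟨a * n, han, QuotientGroup.mk_mul_of_mem a n.2⟩

variable [Fintype (G ⧸ N)]

theorem conjSum_comp_mk' (F : G ⧸ N → ℂ) :
    conjSum (F ∘ mk' N) = (Nat.card N : ℂ) • (conjSum F ∘ mk' N) := by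
  funext g
  have hsum :=
    MonoidHom.sum_comp_of_surjective (mk'_surjective N) fun y : G ⧸ N => F (y⁻¹ * g * y)
  rw [ker_mk', nsmul_eq_mul] at hsum
  exact hsum

theorem inducedChar_comp_mk (K : Subgroup (G ⧸ N)) (μ : K →* ℂ) :
    inducedChar K μ ∘ (↑) =
      inducedChar (K.comap (mk' N)) (μ.comp ((mk' N).subgroupComap K)) := by
  rw [inducedChar_eq_smul_conjSum, inducedChar_eq_smul_conjSum, zeroExtension_comp,
    conjSum_comp_mk', card_comap_mk', smul_smul]
  have hN : (Nat.card N : ℂ) ≠ 0 := Nat.cast_ne_zero.2 Nat.card_pos.ne'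
  funext g
  simp only [Function.comp_apply, Pi.smul_apply, smul_eq_mul, Nat.cast_mul, mul_inv, coe_mk',
    mul_assoc, inv_mul_cancel_left₀ hN]

theorem averageOver_inducedChar_of_le_ker (hlam : N.subgroupOf H ≤ lam.ker) :
    averageOver N (inducedChar H lam) =
      inducedChar (H.map (mk' N)) (quotientChar N H lam hlam) ∘ mk' N := by
  rw [inducedChar_eq_smul_conjSum, inducedChar_eq_smul_conjSum, map_smul, averageOver_conjSum,
    averageOver_zeroExtension_of_le_ker N H lam hlam, map_smul, conjSum_comp_mk',
    card_eq_card_map_mk'_mul_card_subgroupOf N H]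
  have hN : (Nat.card N : ℂ) ≠ 0 := Nat.cast_ne_zero.2 Nat.card_pos.ne'
  have hc : (Nat.card (N.subgroupOf H) : ℂ) ≠ 0 := Nat.cast_ne_zero.2 Nat.card_pos.ne'
  funext g
  simp only [Function.comp_apply, Pi.smul_apply, smul_eq_mul, Nat.cast_mul]
  field_simp

end Quotient

/-- For N ⊴ G, the monoid M(G/N), viewed inside the characters of G via
inflation, equals the intersection of M(G) with the functions factoring through G/N
(i.e. R_{G/N} = R_G ∩ K[x₁,…,x_s]). -/
theorem stmt_9 (N : Subgroup G) [N.Normal] [Fintype (G ⧸ N)] :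
    (fun f : (G ⧸ N) → ℂ => f ∘ QuotientGroup.mk) ''
        (AddSubmonoid.closure {f : (G ⧸ N) → ℂ | IsMonomialChar f} : Set ((G ⧸ N) → ℂ)) =
      (AddSubmonoid.closure {f : G → ℂ | IsMonomialChar f} : Set (G → ℂ)) ∩
        {f : G → ℂ | ∀ g : G, ∀ n ∈ N, f (g * n) = f g} := by
  set MQ := AddSubmonoid.closure {f : (G ⧸ N) → ℂ | IsMonomialChar f}
  set MG := AddSubmonoid.closure {f : G → ℂ | IsMonomialChar f}
  let inflation := (LinearMap.funLeft ℂ ℂ (mk' N)).toAddMonoidHom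
  have hinflation : MQ.map inflation ≤ MG := by
    rw [AddMonoidHom.map_mclosure]
    refine AddSubmonoid.closure_mono ?_
    rintro _ ⟨_, ⟨K, μ, rfl⟩, rfl⟩
    exact ⟨_, _, inducedChar_comp_mk N K μ⟩
  have haverage : MG ≤ (MQ.map inflation).comap (averageOver N).toAddMonoidHom := by
    refine AddSubmonoid.closure_le.2 ?_
    rintro _ ⟨H, lam, rfl⟩
    by_cases hlam : N.subgroupOf H ≤ lam.ker
    · exact ⟨_, AddSubmonoid.subset_closure ⟨_, _, rfl⟩,
        (averageOver_inducedChar_of_le_ker N H lam hlam).symm⟩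
    · show averageOver N _ ∈ MQ.map inflation
      rw [averageOver_inducedChar_of_not_le_ker N H lam hlam]
      exact zero_mem _
  ext f
  constructor
  · rintro ⟨f, hf, rfl⟩
    exact ⟨hinflation ⟨f, hf, rfl⟩, fun g n hn => congrArg f (mk_mul_of_mem g hn)⟩
  · rintro ⟨hf, hinv⟩
    rw [← averageOver_of_forall_mul_mem N hinv]
    exact haverage hf
end

section
/- Let G = SL(2,3). Then the monoid generated by the (exponent vectors of the) monomials x₁, x₂, x₃, x₇, x₄x₅, x₄x₆, x₅x₆, x₄x₅x₆ in ℕ^7 satisfies: for all j ≠ k ∈ {1,…,7} there is a generator divisible by x_j and not by x_k; and the toric ideal of relations among these eight generators is the principal ideal generated by t₅t₆t₇ − t₈² (so R_{SL(2,3)} ≅ K[t₁,…,t₈]/(t₅t₆t₇ − t₈²)). -/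
open scoped BigOperators

def slGens : Fin 8 → Fin 7 → ℕ :=
  ![![1,0,0,0,0,0,0], ![0,1,0,0,0,0,0], ![0,0,1,0,0,0,0], ![0,0,0,0,0,0,1],
    ![0,0,0,1,1,0,0], ![0,0,0,1,0,1,0], ![0,0,0,0,1,1,0], ![0,0,0,1,1,1,0]]

namespace Stmt19

open MvPolynomial Finsupp

variable (K : Type) [Field K]

noncomputable def F : Fin 8 → MvPolynomial (Fin 7) K :=
  fun i => monomial (equivFunOnFinite.symm (slGens i)) 1

def ψ (m : Fin 8 →₀ ℕ) : Fin 7 → ℕ := fun j => ∑ i, m i * slGens i j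

lemma aeval_monomial_eq (m : Fin 8 →₀ ℕ) (c : K) :
    aeval (F K) (monomial m c) = monomial (equivFunOnFinite.symm (ψ m)) c := by
  rw [MvPolynomial.aeval_monomial]
  have h1 : (m.prod fun i k => F K i ^ k)
      = monomial (∑ i, m i • equivFunOnFinite.symm (slGens i)) (1 : K) := by
    rw [Finsupp.prod_fintype _ _ (fun i => pow_zero _)]
    rw [monomial_sum_one]
    refine Finset.prod_congr rfl fun i _ => ?_
    rw [F, monomial_pow, one_pow]
  have h2 : (∑ i, m i • equivFunOnFinite.symm (slGens i))
      = equivFunOnFinite.symm (ψ m) := by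
    ext j
    simp [ψ, Finsupp.finset_sum_apply, mul_comm]
  rw [h1, h2]
  rw [algebraMap_eq, C_mul_monomial, mul_one]

lemma psi0 (m : Fin 8 →₀ ℕ) : ψ m 0 = m 0 := by
  simp only [ψ, Fin.sum_univ_eight, show slGens 0 0 = 1 from rfl, show slGens 1 0 = 0 from rfl, show slGens 2 0 = 0 from rfl, show slGens 3 0 = 0 from rfl, show slGens 4 0 = 0 from rfl, show slGens 5 0 = 0 from rfl, show slGens 6 0 = 0 from rfl, show slGens 7 0 = 0 from rfl]
  omega

lemma psi1 (m : Fin 8 →₀ ℕ) : ψ m 1 = m 1 := by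
  simp only [ψ, Fin.sum_univ_eight, show slGens 0 1 = 0 from rfl, show slGens 1 1 = 1 from rfl, show slGens 2 1 = 0 from rfl, show slGens 3 1 = 0 from rfl, show slGens 4 1 = 0 from rfl, show slGens 5 1 = 0 from rfl, show slGens 6 1 = 0 from rfl, show slGens 7 1 = 0 from rfl]
  omega

lemma psi2 (m : Fin 8 →₀ ℕ) : ψ m 2 = m 2 := by
  simp only [ψ, Fin.sum_univ_eight, show slGens 0 2 = 0 from rfl, show slGens 1 2 = 0 from rfl, show slGens 2 2 = 1 from rfl, show slGens 3 2 = 0 from rfl, show slGens 4 2 = 0 from rfl, show slGens 5 2 = 0 from rfl, show slGens 6 2 = 0 from rfl, show slGens 7 2 = 0 from rfl]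
  omega

lemma psi3 (m : Fin 8 →₀ ℕ) : ψ m 3 = m 4 + m 5 + m 7 := by
  simp only [ψ, Fin.sum_univ_eight, show slGens 0 3 = 0 from rfl, show slGens 1 3 = 0 from rfl, show slGens 2 3 = 0 from rfl, show slGens 3 3 = 0 from rfl, show slGens 4 3 = 1 from rfl, show slGens 5 3 = 1 from rfl, show slGens 6 3 = 0 from rfl, show slGens 7 3 = 1 from rfl]
  omega

lemma psi4 (m : Fin 8 →₀ ℕ) : ψ m 4 = m 4 + m 6 + m 7 := by
  simp only [ψ, Fin.sum_univ_eight, show slGens 0 4 = 0 from rfl, show slGens 1 4 = 0 from rfl, show slGens 2 4 = 0 from rfl, show slGens 3 4 = 0 from rfl, show slGens 4 4 = 1 from rfl, show slGens 5 4 = 0 from rfl, show slGens 6 4 = 1 from rfl, show slGens 7 4 = 1 from rfl]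
  omega

lemma psi5 (m : Fin 8 →₀ ℕ) : ψ m 5 = m 5 + m 6 + m 7 := by
  simp only [ψ, Fin.sum_univ_eight, show slGens 0 5 = 0 from rfl, show slGens 1 5 = 0 from rfl, show slGens 2 5 = 0 from rfl, show slGens 3 5 = 0 from rfl, show slGens 4 5 = 0 from rfl, show slGens 5 5 = 1 from rfl, show slGens 6 5 = 1 from rfl, show slGens 7 5 = 1 from rfl]
  omega

lemma psi6 (m : Fin 8 →₀ ℕ) : ψ m 6 = m 3 := by
  simp only [ψ, Fin.sum_univ_eight, show slGens 0 6 = 0 from rfl, show slGens 1 6 = 0 from rfl, show slGens 2 6 = 0 from rfl, show slGens 3 6 = 1 from rfl, show slGens 4 6 = 0 from rfl, show slGens 5 6 = 0 from rfl, show slGens 6 6 = 0 from rfl, show slGens 7 6 = 0 from rfl]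
  omega
/-- The reduction of an exponent vector modulo t₈² → t₅t₆t₇. -/
noncomputable def red (m : Fin 8 →₀ ℕ) : Fin 8 →₀ ℕ :=
  equivFunOnFinite.symm
    ![m 0, m 1, m 2, m 3, m 4 + m 7 / 2, m 5 + m 7 / 2, m 6 + m 7 / 2, m 7 % 2]

lemma red0 (m : Fin 8 →₀ ℕ) : red m 0 = m 0 := rfl
lemma red1 (m : Fin 8 →₀ ℕ) : red m 1 = m 1 := rfl
lemma red2 (m : Fin 8 →₀ ℕ) : red m 2 = m 2 := rfl
lemma red3 (m : Fin 8 →₀ ℕ) : red m 3 = m 3 := rfl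
lemma red4 (m : Fin 8 →₀ ℕ) : red m 4 = m 4 + m 7 / 2 := rfl
lemma red5 (m : Fin 8 →₀ ℕ) : red m 5 = m 5 + m 7 / 2 := rfl
lemma red6 (m : Fin 8 →₀ ℕ) : red m 6 = m 6 + m 7 / 2 := rfl
lemma red7 (m : Fin 8 →₀ ℕ) : red m 7 = m 7 % 2 := rfl

lemma red_seven (m : Fin 8 →₀ ℕ) : red m 7 ≤ 1 := by rw [red7]; omega

lemma psi_red (m : Fin 8 →₀ ℕ) : ψ (red m) = ψ m := by
  funext j
  fin_cases j
  · show ψ (red m) 0 = ψ m 0; rw [psi0, psi0, red0]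
  · show ψ (red m) 1 = ψ m 1; rw [psi1, psi1, red1]
  · show ψ (red m) 2 = ψ m 2; rw [psi2, psi2, red2]
  · show ψ (red m) 3 = ψ m 3; rw [psi3, psi3, red4, red5, red7]; omega
  · show ψ (red m) 4 = ψ m 4; rw [psi4, psi4, red4, red6, red7]; omega
  · show ψ (red m) 5 = ψ m 5; rw [psi5, psi5, red5, red6, red7]; omega
  · show ψ (red m) 6 = ψ m 6; rw [psi6, psi6, red3]

lemma psi_inj (m m' : Fin 8 →₀ ℕ) (h7 : m 7 ≤ 1) (h7' : m' 7 ≤ 1)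
    (h : ψ m = ψ m') : m = m' := by
  have e0 := congrFun h 0; rw [psi0, psi0] at e0
  have e1 := congrFun h 1; rw [psi1, psi1] at e1
  have e2 := congrFun h 2; rw [psi2, psi2] at e2
  have e3 := congrFun h 3; rw [psi3, psi3] at e3
  have e4 := congrFun h 4; rw [psi4, psi4] at e4
  have e5 := congrFun h 5; rw [psi5, psi5] at e5
  have e6 := congrFun h 6; rw [psi6, psi6] at e6
  ext i
  fin_cases i
  · show m 0 = m' 0; omega
  · show m 1 = m' 1; omega
  · show m 2 = m' 2; omega
  · show m 3 = m' 3; omega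
  · show m 4 = m' 4; omega
  · show m 5 = m' 5; omega
  · show m 6 = m' 6; omega
  · show m 7 = m' 7; omega

end Stmt19
namespace Stmt19

open MvPolynomial Finsupp

variable (K : Type) [Field K]

noncomputable def B : MvPolynomial (Fin 8) K :=
  X 4 * X 5 * X 6 - X 7 ^ 2

lemma sub_red_mem (m : Fin 8 →₀ ℕ) (c : K) :
    monomial m c - monomial (red m) c ∈ Ideal.span {B K} := by
  set n : Fin 8 →₀ ℕ :=
    equivFunOnFinite.symm ![m 0, m 1, m 2, m 3, m 4, m 5, m 6, 0] with hn
  have n0 : n 0 = m 0 := rfl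
  have n1 : n 1 = m 1 := rfl
  have n2 : n 2 = m 2 := rfl
  have n3 : n 3 = m 3 := rfl
  have n4 : n 4 = m 4 := rfl
  have n5 : n 5 = m 5 := rfl
  have n6 : n 6 = m 6 := rfl
  have n7 : n 7 = 0 := rfl
  have hX456 : (X 4 * X 5 * X 6 : MvPolynomial (Fin 8) K)
      = monomial (single 4 1 + single 5 1 + single 6 1) 1 := by
    rw [X, X, X, monomial_mul, monomial_mul, one_mul, one_mul]
  have h1 : (monomial m c : MvPolynomial (Fin 8) K)
      = monomial n c * (X 7 ^ 2) ^ (m 7 / 2) * X 7 ^ (m 7 % 2) := by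
    rw [← pow_mul, mul_assoc, ← pow_add, X_pow_eq_monomial, monomial_mul, mul_one]
    refine congrArg (fun u => (monomial u c : MvPolynomial (Fin 8) K)) ?_
    ext i
    rw [Finsupp.add_apply, Finsupp.single_apply]
    fin_cases i
    · show m 0 = n 0 + (if (7 : Fin 8) = 0 then 2 * (m 7 / 2) + m 7 % 2 else 0); rw [n0]; simp
    · show m 1 = n 1 + (if (7 : Fin 8) = 1 then 2 * (m 7 / 2) + m 7 % 2 else 0); rw [n1]; simp
    · show m 2 = n 2 + (if (7 : Fin 8) = 2 then 2 * (m 7 / 2) + m 7 % 2 else 0); rw [n2]; simp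
    · show m 3 = n 3 + (if (7 : Fin 8) = 3 then 2 * (m 7 / 2) + m 7 % 2 else 0); rw [n3]; simp
    · show m 4 = n 4 + (if (7 : Fin 8) = 4 then 2 * (m 7 / 2) + m 7 % 2 else 0); rw [n4]; simp
    · show m 5 = n 5 + (if (7 : Fin 8) = 5 then 2 * (m 7 / 2) + m 7 % 2 else 0); rw [n5]; simp
    · show m 6 = n 6 + (if (7 : Fin 8) = 6 then 2 * (m 7 / 2) + m 7 % 2 else 0); rw [n6]; simp
    · show m 7 = n 7 + (if (7 : Fin 8) = 7 then 2 * (m 7 / 2) + m 7 % 2 else 0); rw [n7]; simp; omega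
  have h2 : (monomial (red m) c : MvPolynomial (Fin 8) K)
      = monomial n c * (X 4 * X 5 * X 6) ^ (m 7 / 2) * X 7 ^ (m 7 % 2) := by
    rw [hX456, monomial_pow, one_pow, X_pow_eq_monomial, monomial_mul, monomial_mul,
      mul_one, mul_one]
    refine congrArg (fun u => (monomial u c : MvPolynomial (Fin 8) K)) ?_
    ext i
    rw [Finsupp.add_apply, Finsupp.add_apply, Finsupp.smul_apply, Finsupp.add_apply,
      Finsupp.add_apply, Finsupp.single_apply, Finsupp.single_apply, Finsupp.single_apply,
      Finsupp.single_apply, smul_eq_mul]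
    fin_cases i
    · show red m 0 = n 0 + m 7 / 2 * (((if (4 : Fin 8) = 0 then 1 else 0) + if (5 : Fin 8) = 0 then 1 else 0) + if (6 : Fin 8) = 0 then 1 else 0) + if (7 : Fin 8) = 0 then m 7 % 2 else 0
      rw [red0, n0]
      simp
      try omega
    · show red m 1 = n 1 + m 7 / 2 * (((if (4 : Fin 8) = 1 then 1 else 0) + if (5 : Fin 8) = 1 then 1 else 0) + if (6 : Fin 8) = 1 then 1 else 0) + if (7 : Fin 8) = 1 then m 7 % 2 else 0
      rw [red1, n1]
      simp
      try omega
    · show red m 2 = n 2 + m 7 / 2 * (((if (4 : Fin 8) = 2 then 1 else 0) + if (5 : Fin 8) = 2 then 1 else 0) + if (6 : Fin 8) = 2 then 1 else 0) + if (7 : Fin 8) = 2 then m 7 % 2 else 0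
      rw [red2, n2]
      simp
      try omega
    · show red m 3 = n 3 + m 7 / 2 * (((if (4 : Fin 8) = 3 then 1 else 0) + if (5 : Fin 8) = 3 then 1 else 0) + if (6 : Fin 8) = 3 then 1 else 0) + if (7 : Fin 8) = 3 then m 7 % 2 else 0
      rw [red3, n3]
      simp
      try omega
    · show red m 4 = n 4 + m 7 / 2 * (((if (4 : Fin 8) = 4 then 1 else 0) + if (5 : Fin 8) = 4 then 1 else 0) + if (6 : Fin 8) = 4 then 1 else 0) + if (7 : Fin 8) = 4 then m 7 % 2 else 0
      rw [red4, n4]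
      simp
      try omega
    · show red m 5 = n 5 + m 7 / 2 * (((if (4 : Fin 8) = 5 then 1 else 0) + if (5 : Fin 8) = 5 then 1 else 0) + if (6 : Fin 8) = 5 then 1 else 0) + if (7 : Fin 8) = 5 then m 7 % 2 else 0
      rw [red5, n5]
      simp
      try omega
    · show red m 6 = n 6 + m 7 / 2 * (((if (4 : Fin 8) = 6 then 1 else 0) + if (5 : Fin 8) = 6 then 1 else 0) + if (6 : Fin 8) = 6 then 1 else 0) + if (7 : Fin 8) = 6 then m 7 % 2 else 0
      rw [red6, n6]
      simp
      try omega
    · show red m 7 = n 7 + m 7 / 2 * (((if (4 : Fin 8) = 7 then 1 else 0) + if (5 : Fin 8) = 7 then 1 else 0) + if (6 : Fin 8) = 7 then 1 else 0) + if (7 : Fin 8) = 7 then m 7 % 2 else 0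
      rw [red7, n7]
      simp
      try omega
  rw [Ideal.mem_span_singleton]
  obtain ⟨q, hq⟩ := sub_dvd_pow_sub_pow (X 7 ^ 2 : MvPolynomial (Fin 8) K)
    (X 4 * X 5 * X 6) (m 7 / 2)
  refine ⟨-(monomial n c * X 7 ^ (m 7 % 2) * q), ?_⟩
  rw [h1, h2, B]
  linear_combination (monomial n c * X 7 ^ (m 7 % 2)) * hq

end Stmt19
namespace Stmt19

open MvPolynomial Finsupp

variable (K : Type) [Field K]

lemma aeval_B : aeval (F K) (B K) = 0 := by
  set b : Fin 8 →₀ ℕ := equivFunOnFinite.symm ![0,0,0,0,0,0,0,2] with hbdef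
  have b0 : b 0 = 0 := rfl
  have b1 : b 1 = 0 := rfl
  have b2 : b 2 = 0 := rfl
  have b3 : b 3 = 0 := rfl
  have b4 : b 4 = 0 := rfl
  have b5 : b 5 = 0 := rfl
  have b6 : b 6 = 0 := rfl
  have b7 : b 7 = 2 := rfl
  have hb : (X 7 ^ 2 : MvPolynomial (Fin 8) K) = monomial b 1 := by
    rw [X_pow_eq_monomial]
    refine congrArg (fun u => (monomial u (1 : K) : MvPolynomial (Fin 8) K)) ?_
    ext i
    fin_cases i
    · show (single (7 : Fin 8) 2) 0 = b 0; rw [b0]; simp [Finsupp.single_apply]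
    · show (single (7 : Fin 8) 2) 1 = b 1; rw [b1]; simp [Finsupp.single_apply]
    · show (single (7 : Fin 8) 2) 2 = b 2; rw [b2]; simp [Finsupp.single_apply]
    · show (single (7 : Fin 8) 2) 3 = b 3; rw [b3]; simp [Finsupp.single_apply]
    · show (single (7 : Fin 8) 2) 4 = b 4; rw [b4]; simp [Finsupp.single_apply]
    · show (single (7 : Fin 8) 2) 5 = b 5; rw [b5]; simp [Finsupp.single_apply]
    · show (single (7 : Fin 8) 2) 6 = b 6; rw [b6]; simp [Finsupp.single_apply]
    · show (single (7 : Fin 8) 2) 7 = b 7; rw [b7]; simp [Finsupp.single_apply]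
  have ha : (X 4 * X 5 * X 6 : MvPolynomial (Fin 8) K) = monomial (red b) 1 := by
    rw [X, X, X, monomial_mul, monomial_mul, one_mul, one_mul]
    refine congrArg (fun u => (monomial u (1 : K) : MvPolynomial (Fin 8) K)) ?_
    ext i
    rw [Finsupp.add_apply, Finsupp.add_apply, Finsupp.single_apply, Finsupp.single_apply,
      Finsupp.single_apply]
    fin_cases i
    · show _ = red b 0; rw [red0, b0]; simp
    · show _ = red b 1; rw [red1, b1]; simp
    · show _ = red b 2; rw [red2, b2]; simp
    · show _ = red b 3; rw [red3, b3]; simp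
    · show _ = red b 4; rw [red4, b4, b7]; simp
    · show _ = red b 5; rw [red5, b5, b7]; simp
    · show _ = red b 6; rw [red6, b6, b7]; simp
    · show _ = red b 7; rw [red7, b7]; simp
  rw [B, map_sub, ha, hb, aeval_monomial_eq, aeval_monomial_eq, psi_red, sub_self]

lemma reduced_eq_zero (q : MvPolynomial (Fin 8) K)
    (hs : ∀ u ∈ q.support, (u : Fin 8 →₀ ℕ) 7 ≤ 1)
    (h : aeval (F K) q = 0) : q = 0 := by
  have hexp : aeval (F K) q
      = ∑ u ∈ q.support, monomial (equivFunOnFinite.symm (ψ u)) (coeff u q) := by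
    conv_lhs => rw [as_sum q]
    rw [map_sum]
    exact Finset.sum_congr rfl fun u _ => aeval_monomial_eq K u _
  have hco : ∀ u ∈ q.support, coeff u q = 0 := by
    intro u hu
    have h0 := congrArg (coeff (equivFunOnFinite.symm (ψ u))) (hexp.symm.trans h)
    rw [coeff_sum, coeff_zero] at h0
    have : ∀ v ∈ q.support,
        coeff (equivFunOnFinite.symm (ψ u)) (monomial (equivFunOnFinite.symm (ψ v)) (coeff v q))
          = if v = u then coeff v q else 0 := by
      intro v hv
      rw [coeff_monomial]
      by_cases hvu : v = u
      · simp [hvu]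
      · have : ¬ equivFunOnFinite.symm (ψ v) = equivFunOnFinite.symm (ψ u) := by
          intro hh
          exact hvu (psi_inj v u (hs v hv) (hs u hu) (equivFunOnFinite.symm.injective hh))
        simp [this, hvu]
    rw [Finset.sum_congr rfl this, Finset.sum_ite_eq' q.support u (fun v => coeff v q)] at h0
    simpa [hu] using h0
  apply MvPolynomial.ext
  intro u
  rw [coeff_zero]
  by_cases hu : u ∈ q.support
  · exact hco u hu
  · exact MvPolynomial.notMem_support_iff.mp hu

lemma ker_eq : RingHom.ker ((aeval (F K) :
      MvPolynomial (Fin 8) K →ₐ[K] MvPolynomial (Fin 7) K) :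
      MvPolynomial (Fin 8) K →+* MvPolynomial (Fin 7) K) = Ideal.span {B K} := by
  apply le_antisymm
  · intro p hp
    have hp0 : aeval (F K) p = 0 := hp
    set q : MvPolynomial (Fin 8) K :=
      ∑ v ∈ p.support, monomial (red v) (coeff v p) with hq
    have hpq : p - q ∈ Ideal.span {B K} := by
      have : p - q = ∑ v ∈ p.support,
          (monomial v (coeff v p) - monomial (red v) (coeff v p)) := by
        rw [Finset.sum_sub_distrib, ← as_sum]
      rw [this]
      exact Ideal.sum_mem _ fun v _ => sub_red_mem K v _
    have haq : aeval (F K) q = 0 := by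
      obtain ⟨t, ht⟩ := Ideal.mem_span_singleton.mp hpq
      have : aeval (F K) (p - q) = 0 := by
        rw [ht, map_mul, aeval_B, zero_mul]
      rw [map_sub, hp0, zero_sub, neg_eq_zero] at this
      exact this
    have hq0 : q = 0 := by
      refine reduced_eq_zero K q ?_ haq
      intro u hu
      have := MvPolynomial.support_sum (s := p.support)
        (f := fun v => monomial (red v) (coeff v p)) hu
      rw [Finset.mem_biUnion] at this
      obtain ⟨v, _, hv⟩ := this
      have := support_monomial_subset hv
      rw [Finset.mem_singleton] at this
      rw [this]
      exact red_seven v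
    have : p = p - q := by rw [hq0, sub_zero]
    rw [this]
    exact hpq
  · rw [Ideal.span_le, Set.singleton_subset_iff]
    show B K ∈ RingHom.ker _
    rw [RingHom.mem_ker]
    exact aeval_B K

end Stmt19

/-- For G = SL(2,3), the generators x₁, x₂, x₃, x₇, x₄x₅, x₄x₆, x₅x₆,
x₄x₅x₆ of R_G satisfy the almost monomial divisibility condition, and the toric ideal
of relations among them is the principal ideal (t₅t₆t₇ − t₈²), so
R_{SL(2,3)} ≅ K[t₁,…,t₈]/(t₅t₆t₇ − t₈²). -/
theorem stmt_19 (K : Type) [Field K] :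
    (∀ j k : Fin 7, j ≠ k → ∃ i : Fin 8, 0 < slGens i j ∧ slGens i k = 0) ∧
    RingHom.ker ((MvPolynomial.aeval (R := K)
        (fun i : Fin 8 => MvPolynomial.monomial
          (Finsupp.equivFunOnFinite.symm (slGens i)) (1 : K)) :
        MvPolynomial (Fin 8) K →ₐ[K] MvPolynomial (Fin 7) K) : MvPolynomial (Fin 8) K →+* MvPolynomial (Fin 7) K) =
      Ideal.span {(MvPolynomial.X 4 * MvPolynomial.X 5 * MvPolynomial.X 6
        - MvPolynomial.X 7 ^ 2 : MvPolynomial (Fin 8) K)} := by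
  exact ⟨by decide, Stmt19.ker_eq K⟩
end
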